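/- arXiv:math/0012247 — 5 statements merged into one kernel-verified Lean document; each statement's English description precedes it below -/
import Mathlib

section
/- Let B, B' be sets equipped with maps εᵢ, φᵢ : B (resp. B') → ℕ and partial maps ẽᵢ, and define the tensor action on B × B' by ẽᵢ(b, b') = (ẽᵢ b, b') if φᵢ(b) ≥ εᵢ(b') and (b, ẽᵢ b') if φᵢ(b) < εᵢ(b'). Let ω be a map from B (resp. B') into sets C, C' with analogous data ε'ᵢ, φ'ᵢ, ẽ'ᵢ, and suppose for a fixed index i and constant c ≥ 1: (a) ω(ẽᵢ b) = (ẽ'ᵢ)^c ω(b) for all b where ẽᵢ b is defined, (b) φ'ᵢ(ω b) = c·φᵢ(b) and ε'ᵢ(ω b) = c·εᵢ(b), and (c) applying ẽ'ᵢ to (ω b, ω b') any number of times up to c does not change which tensor factor is acted on (i.e., φ'ᵢ of the first factor stays ≥ or stays < ε'ᵢ of the second throughout). Then ω(ẽᵢ(b, b')) = (ẽ'ᵢ)^c (ω b, ω b') whenever ẽᵢ(b,b') is defined, where ω acts componentwise on pairs. -/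
/-- `k`-fold application of a partial map (encoded via `Option`). -/
def stepOpt {α : Type*} (e : α → Option α) (k : ℕ) (x : Option α) : Option α :=
  (fun o => o.bind e)^[k] x

/-- The tensor-product action of a crystal operator on a pair, following the
signature rule: act on the first factor if `φ(b) ≥ ε(b')`, otherwise on the
second. -/
def tensorE {α β : Type*} (φ : α → ℕ) (ε : β → ℕ)
    (e : α → Option α) (e' : β → Option β) (p : α × β) : Option (α × β) :=
  if ε p.2 ≤ φ p.1 then (e p.1).map (fun a => (a, p.2))
  else (e' p.2).map (fun b => (p.1, b))

/-! Since `ω` scales `φᵢ` and `εᵢ` by the same `c ≥ 1`, the pair `(ω b, ω' b')` makes the same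
choice of tensor factor as `(b, b')`, and by the stability hypothesis it keeps making it for `c`
steps; so `(ẽ'ᵢ)^c` acts on that factor alone, where it is `ω ∘ ẽᵢ` by the single-factor case. -/

theorem stepOpt_succ {α : Type*} (e : α → Option α) (k : ℕ) (x : Option α) :
    stepOpt e (k + 1) x = (stepOpt e k x).bind e :=
  Function.iterate_succ_apply' _ _ _

theorem stepOpt_some_map {α β : Type*} {eα : α → Option α} {eβ : β → Option β} (f : α → β)
    {n : ℕ} {x : α}
    (h : ∀ k < n, ∀ x', stepOpt eβ k (some (f x)) = some (f x') → eβ (f x') = (eα x').map f) :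
    stepOpt eβ n (some (f x)) = (stepOpt eα n (some x)).map f := by
  induction n with
  | zero => rfl
  | succ n ih =>
    have orbit := ih fun k hk => h k (Nat.lt_succ_of_lt hk)
    rw [stepOpt_succ, stepOpt_succ, orbit]
    cases hx : stepOpt eα n (some x) with
    | none => rfl
    | some x' =>
      simp only [Option.map_some, Option.bind_some]
      exact h n n.lt_succ_self x' (by rw [orbit, hx, Option.map_some])

section tensorE

variable {α β : Type*} {φ : α → ℕ} {ε : β → ℕ} {e : α → Option α} {e' : β → Option β}
  {x : α} {y : β}

theorem tensorE_of_le (h : ε y ≤ φ x) :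
    tensorE φ ε e e' (x, y) = (e x).map fun a => (a, y) :=
  if_pos h

theorem tensorE_of_not_le (h : ¬ε y ≤ φ x) :
    tensorE φ ε e e' (x, y) = (e' y).map fun b => (x, b) :=
  if_neg h

end tensorE

/-- Abstract form of Lemma 2: if `ω` intertwines `ẽᵢ` with `(ẽ'ᵢ)^c` on each
factor, scales `φᵢ`, `εᵢ` by `c ≥ 1`, and the side of the tensor rule is
stable along the first `c` applications of `ẽ'ᵢ`, then `ω` (acting
componentwise) intertwines the tensor actions: `ω(ẽᵢ(b,b')) = (ẽ'ᵢ)^c (ωb, ωb')`. -/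
theorem stmt_7 {B B' C C' : Type*}
    (εB φB : B → ℕ) (εB' φB' : B' → ℕ)
    (eB : B → Option B) (eB' : B' → Option B')
    (εC φC : C → ℕ) (εC' φC' : C' → ℕ)
    (eC : C → Option C) (eC' : C' → Option C')
    (ω : B → C) (ω' : B' → C') (c : ℕ) (hc : 1 ≤ c)
    (ha : ∀ (b : B) (b₂ : B), eB b = some b₂ →
      stepOpt eC c (some (ω b)) = some (ω b₂))
    (ha' : ∀ (b' : B') (b₂' : B'), eB' b' = some b₂' →
      stepOpt eC' c (some (ω' b')) = some (ω' b₂'))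
    (hb : ∀ b : B, φC (ω b) = c * φB b ∧ εC (ω b) = c * εB b)
    (hb' : ∀ b' : B', φC' (ω' b') = c * φB' b' ∧ εC' (ω' b') = c * εB' b')
    (hstay : ∀ (b : B) (b' : B') (k : ℕ), k < c → ∀ p : C × C',
      stepOpt (tensorE φC εC' eC eC') k (some (ω b, ω' b')) = some p →
      (εC' p.2 ≤ φC p.1 ↔ εC' (ω' b') ≤ φC (ω b))) :
    ∀ (b : B) (b' : B') (q : B × B'),
      tensorE φB εB' eB eB' (b, b') = some q →
      stepOpt (tensorE φC εC' eC eC') c (some (ω b, ω' b')) =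
        some (ω q.1, ω' q.2) := by
  intro b b' q hq
  have side : εC' (ω' b') ≤ φC (ω b) ↔ εB' b' ≤ φB b := by
    rw [(hb' b').2, (hb b).1, Nat.mul_le_mul_left_iff hc]
  by_cases h : εB' b' ≤ φB b
  · rw [tensorE_of_le h] at hq
    obtain ⟨b₂, hb₂, rfl⟩ := Option.map_eq_some_iff.1 hq
    rw [stepOpt_some_map (fun a => (a, ω' b')) fun k hk a hp =>
      tensorE_of_le ((hstay b b' k hk _ hp).2 (side.2 h)), ha b b₂ hb₂]
    rfl
  · rw [tensorE_of_not_le h] at hq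
    obtain ⟨b₂, hb₂, rfl⟩ := Option.map_eq_some_iff.1 hq
    rw [stepOpt_some_map (fun a => (ω b, a)) fun k hk a hp =>
      tensorE_of_not_le ((hstay b b' k hk _ hp).not.2 (side.not.2 h)), ha' b' b₂ hb₂]
    rfl
end

section
/- With the type B alphabet and two-row insertion rules as above, suppose α' ≤ α and (α, α') ≠ (∘, ∘). If inserting α into a two-row semistandard B tableau T adds a new box at the end of the first row, then inserting α' into the tableau (α → T) also adds a new box at the end of the first row. -/
/-- A column with at most two boxes: `one β`, or `two α β` with `α` above `β`.
A tableau with at most two rows is a list of such columns, read left to right. -/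
inductive BCol : Type
  | one (β : ℕ)
  | two (α β : ℕ)

/-- The type `B` alphabet `1 < ⋯ < n < ∘ < n̄ < ⋯ < 1̄` is encoded as
`{1, …, 2n+1}` with `∘ = n+1` and `x̄ = 2n+2−x` for `1 ≤ x ≤ n`. -/
def barB (n x : ℕ) : ℕ := 2 * n + 2 - x

/-- The top (first-row) letter of a column. -/
def BCol.top : BCol → ℕ
  | .one β => β
  | .two α _ => α

/-- Validity of a single column of a semistandard `B` tableau: letters lie in
the alphabet, a two-box column `(α above β)` satisfies `α < β` or
`(α,β) = (∘,∘)`, and no column equals `(1 above 1̄)`. -/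
def BColOK (n : ℕ) : BCol → Prop
  | .one β => 1 ≤ β ∧ β ≤ 2 * n + 1
  | .two α β => 1 ≤ α ∧ β ≤ 2 * n + 1 ∧ (α < β ∨ (α = n + 1 ∧ β = n + 1)) ∧
      ¬(α = 1 ∧ β = 2 * n + 1)

/-- Conditions on two adjacent columns of a semistandard `B` tableau: the shape
has two-box columns to the left of one-box columns, both rows are weakly
increasing, the `(x,x)`-configurations (for `1 ≤ x < n`) are absent, and the
`(n,n)`-configurations (lower-left and upper-right entries equal to
`(n,n̄)`, `(n,∘)`, `(∘,∘)` or `(∘,n̄)`) are absent. -/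
def BAdjOK (n : ℕ) : BCol → BCol → Prop
  | .one α, .one α' => α ≤ α'
  | .one _, .two _ _ => False
  | .two α β, .one α' => α ≤ α' ∧
      ¬((β = n ∨ β = n + 1) ∧ (α' = n + 1 ∨ α' = n + 2))
  | .two α β, .two α' β' => α ≤ α' ∧ β ≤ β' ∧
      ¬((β = n ∨ β = n + 1) ∧ (α' = n + 1 ∨ α' = n + 2)) ∧
      ¬(∃ x, 1 ≤ x ∧ x < n ∧
        ((α = x ∧ α' = x ∧ β' = barB n x) ∨ (α = x ∧ β = barB n x ∧ β' = barB n x)))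

/-- A semistandard `B` tableau with at most two rows, as a list of columns. -/
def SemistdB (n : ℕ) (cols : List BCol) : Prop :=
  (∀ c ∈ cols, BColOK n c) ∧ List.Chain' (BAdjOK n) cols

/-- `RunB n a cols cols' route`: the type `B` column insertion of the letter `a`
into the tableau `cols` (elementary rules A0, A1, B0–B7) yields the tableau
`cols'`; `route` records, column by column along the bumping route, whether the
newly set letter lies in the first row (`true`) or in the second row (`false`). -/
inductive RunB (n : ℕ) : ℕ → List BCol → List BCol → List Bool → Prop
  | a0 (a : ℕ) :
      RunB n a [] [BCol.one a] [true]
  | a1 (a β : ℕ) (rest : List BCol)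
      (h : β < a ∨ (β = n + 1 ∧ a = n + 1)) :
      RunB n a (BCol.one β :: rest) (BCol.two β a :: rest) [false]
  | b0 (a β : ℕ) (rest rest' : List BCol) (route : List Bool)
      (h : a ≤ β) (hne : ¬(a = n + 1 ∧ β = n + 1))
      (hr : RunB n β rest rest' route) :
      RunB n a (BCol.one β :: rest) (BCol.one a :: rest') (true :: route)
  | b1 (a α γ : ℕ) (rest rest' : List BCol) (route : List Bool)
      (h1 : α < a) (h2 : a ≤ γ) (h3 : ¬(α ≤ n ∧ γ = barB n α))
      (h4 : ¬(a = n + 1 ∧ γ = n + 1))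
      (hr : RunB n γ rest rest' route) :
      RunB n a (BCol.two α γ :: rest) (BCol.two α a :: rest') (false :: route)
  | b2 (a β γ : ℕ) (rest rest' : List BCol) (route : List Bool)
      (h1 : a ≤ β) (h2 : β < γ) (h3 : ¬(a ≤ n ∧ γ = barB n a))
      (h4 : ¬(a = n + 1 ∧ β = n + 1))
      (hr : RunB n β rest rest' route) :
      RunB n a (BCol.two β γ :: rest) (BCol.two a γ :: rest') (true :: route)
  | b3 (x : ℕ) (rest rest' : List BCol) (route : List Bool)
      (hx1 : 1 ≤ x) (hx2 : x ≤ n)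
      (hr : RunB n (barB n x) rest rest' route) :
      RunB n (n + 1) (BCol.two (n + 1) (barB n x) :: rest)
        (BCol.two (n + 1) (n + 1) :: rest') (false :: route)
  | b4 (x : ℕ) (rest rest' : List BCol) (route : List Bool)
      (hx1 : 1 ≤ x) (hx2 : x ≤ n)
      (hr : RunB n (n + 1) rest rest' route) :
      RunB n x (BCol.two (n + 1) (n + 1) :: rest)
        (BCol.two x (n + 1) :: rest') (true :: route)
  | b5 (x β : ℕ) (rest rest' : List BCol) (route : List Bool)
      (hx1 : 2 ≤ x) (hx2 : x ≤ n) (h1 : x ≤ β) (h2 : β ≤ barB n x)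
      (hr : RunB n (barB n (x - 1)) rest rest' route) :
      RunB n β (BCol.two x (barB n x) :: rest)
        (BCol.two (x - 1) β :: rest') (false :: route)
  | b6 (x β : ℕ) (rest rest' : List BCol) (route : List Bool)
      (hx1 : 1 ≤ x) (hx2 : x < n) (h1 : x < β) (h2 : β < barB n x)
      (hr : RunB n β rest rest' route) :
      RunB n x (BCol.two β (barB n x) :: rest)
        (BCol.two (x + 1) (barB n (x + 1)) :: rest') (true :: route)
  | b7 (rest rest' : List BCol) (route : List Bool)
      (hr : RunB n (n + 2) rest rest' route) :
      RunB n n (BCol.two (n + 1) (n + 2) :: rest)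
        (BCol.two n (n + 1) :: rest') (true :: route)



/-! Compare the two bumping routes column by column. Whenever the first insertion passes a
column, bumping `b` onward, the second insertion (of a letter `a' ≤ a`, with `(a, a') ≠ (∘, ∘)`)
passes the same column as well, bumping a letter `b' ≤ b` with `(b, b') ≠ (∘, ∘)`; this is a
finite check over pairs of elementary rules. So the second route also runs through every column
and, like the first, ends by adding a box at the end of the first row. -/

/-- Rules B0–B7 on a single column: inserting `a` into `c` leaves `c'` there and bumps `b`
into the next column. -/
inductive BStep (n : ℕ) : ℕ → BCol → BCol → ℕ → Prop
  | b0 (a β : ℕ) (h : a ≤ β) (hne : ¬(a = n + 1 ∧ β = n + 1)) :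
      BStep n a (.one β) (.one a) β
  | b1 (a α γ : ℕ) (h1 : α < a) (h2 : a ≤ γ) (h3 : ¬(α ≤ n ∧ γ = barB n α))
      (h4 : ¬(a = n + 1 ∧ γ = n + 1)) :
      BStep n a (.two α γ) (.two α a) γ
  | b2 (a β γ : ℕ) (h1 : a ≤ β) (h2 : β < γ) (h3 : ¬(a ≤ n ∧ γ = barB n a))
      (h4 : ¬(a = n + 1 ∧ β = n + 1)) :
      BStep n a (.two β γ) (.two a γ) β
  | b3 (x : ℕ) (hx1 : 1 ≤ x) (hx2 : x ≤ n) :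
      BStep n (n + 1) (.two (n + 1) (barB n x)) (.two (n + 1) (n + 1)) (barB n x)
  | b4 (x : ℕ) (hx1 : 1 ≤ x) (hx2 : x ≤ n) :
      BStep n x (.two (n + 1) (n + 1)) (.two x (n + 1)) (n + 1)
  | b5 (x β : ℕ) (hx1 : 2 ≤ x) (hx2 : x ≤ n) (h1 : x ≤ β) (h2 : β ≤ barB n x) :
      BStep n β (.two x (barB n x)) (.two (x - 1) β) (barB n (x - 1))
  | b6 (x β : ℕ) (hx1 : 1 ≤ x) (hx2 : x < n) (h1 : x < β) (h2 : β < barB n x) :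
      BStep n x (.two β (barB n x)) (.two (x + 1) (barB n (x + 1))) β
  | b7 : BStep n n (.two (n + 1) (n + 2)) (.two n (n + 1)) (n + 2)

namespace BStep

theorem eq_of_eq_one {n a b β : ℕ} {c : BCol} (h : BStep n a c (.one β) b) : β = a := by
  cases h; rfl

theorem bumped_le {n a a' b b' : ℕ} {c c' c'' : BCol}
    (h : BStep n a c c' b) (h' : BStep n a' c' c'' b')
    (hle : a' ≤ a) (hcc : ¬(a = n + 1 ∧ a' = n + 1)) :
    b' ≤ b ∧ ¬(b = n + 1 ∧ b' = n + 1) := by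
  -- `cases` cannot unify the output columns of `h` with the input columns of `h'` directly.
  generalize hd : c' = d at h'
  cases h <;> cases h' <;>
    simp only [barB, BCol.one.injEq, BCol.two.injEq, reduceCtorEq, and_true] at * <;> omega

end BStep

namespace RunB

theorem nil_inv {n a : ℕ} {T' : List BCol} {r : List Bool} (h : RunB n a [] T' r) :
    T' = [.one a] := by
  cases h; rfl

theorem cons_inv {n a : ℕ} {c : BCol} {rest T' : List BCol} {r : List Bool}
    (h : RunB n a (c :: rest) T' r) :
    (∃ β, c = .one β ∧ T' = .two β a :: rest ∧ (β < a ∨ (β = n + 1 ∧ a = n + 1))) ∨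
      ∃ c' b rest' route, T' = c' :: rest' ∧ BStep n a c c' b ∧ RunB n b rest rest' route := by
  cases h with
  | a1 _ β _ h => exact .inl ⟨β, rfl, rfl, h⟩
  | b0 _ _ _ _ _ h hne hr => exact .inr ⟨_, _, _, _, rfl, .b0 _ _ h hne, hr⟩
  | b1 _ _ _ _ _ _ h1 h2 h3 h4 hr => exact .inr ⟨_, _, _, _, rfl, .b1 _ _ _ h1 h2 h3 h4, hr⟩
  | b2 _ _ _ _ _ _ h1 h2 h3 h4 hr => exact .inr ⟨_, _, _, _, rfl, .b2 _ _ _ h1 h2 h3 h4, hr⟩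
  | b3 _ _ _ _ hx1 hx2 hr => exact .inr ⟨_, _, _, _, rfl, .b3 _ hx1 hx2, hr⟩
  | b4 _ _ _ _ hx1 hx2 hr => exact .inr ⟨_, _, _, _, rfl, .b4 _ hx1 hx2, hr⟩
  | b5 _ _ _ _ _ hx1 hx2 h1 h2 hr => exact .inr ⟨_, _, _, _, rfl, .b5 _ _ hx1 hx2 h1 h2, hr⟩
  | b6 _ _ _ _ _ hx1 hx2 h1 h2 hr => exact .inr ⟨_, _, _, _, rfl, .b6 _ _ hx1 hx2 h1 h2, hr⟩
  | b7 _ _ _ hr => exact .inr ⟨_, _, _, _, rfl, .b7, hr⟩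

/-- Rule A1 cannot stop the second insertion: the only elementary step leaving a one-box
column is B0, which leaves `a ≥ a'` there. -/
theorem exists_bStep_of_bStep {n a a' b : ℕ} {c c' : BCol} {rest T' : List BCol} {r : List Bool}
    (hstep : BStep n a c c' b) (h : RunB n a' (c' :: rest) T' r)
    (hle : a' ≤ a) (hcc : ¬(a = n + 1 ∧ a' = n + 1)) :
    ∃ c'' b' rest' route, T' = c'' :: rest' ∧ BStep n a' c' c'' b' ∧
      RunB n b' rest rest' route := by
  rcases h.cons_inv with ⟨β, rfl, -, hβ⟩ | hcont
  · have := hstep.eq_of_eq_one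
    omega
  · exact hcont

end RunB

theorem stmt_10_general (n : ℕ) (α α' : ℕ)
    (hle : α' ≤ α)
    (hcc : ¬(α = n + 1 ∧ α' = n + 1))
    (T T₁ T₂ : List BCol) (r₁ r₂ : List Bool)
    (h1 : RunB n α T T₁ r₁) (hfirst : T₁.length = T.length + 1)
    (h2 : RunB n α' T₁ T₂ r₂) :
    T₂.length = T₁.length + 1 := by
  induction T generalizing α α' T₁ T₂ r₁ r₂ with
  | nil =>
    obtain rfl := h1.nil_inv
    rcases h2.cons_inv with ⟨β, hβ, -, hβα'⟩ | ⟨c', b', rest', route, rfl, -, hrest⟩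
    · cases hβ
      omega
    · simp [hrest.nil_inv]
  | cons c rest ih =>
    rcases h1.cons_inv with ⟨β, -, rfl, -⟩ | ⟨c', b, rest', route, rfl, hstep, hrest⟩
    · simp at hfirst
    obtain ⟨c'', b', rest'', route', rfl, hstep', hrest'⟩ :=
      RunB.exists_bStep_of_bStep hstep h2 hle hcc
    obtain ⟨hb, hbcc⟩ := hstep.bumped_le hstep' hle hcc
    simp only [List.length_cons] at hfirst ⊢
    have := ih _ _ hb hbcc _ _ _ _ hrest (by omega) hrest'
    omega

/-- Corollary of the type `B` column bumping lemma: if `α' ≤ α` with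
`(α,α') ≠ (∘,∘)`, and inserting `α` into a two-row semistandard `B` tableau `T`
adds a new box at the end of the first row (i.e. creates a new column), then
inserting `α'` into `(α → T)` also adds a new box at the end of the first row. -/
theorem stmt_10 (n : ℕ) (hn : 2 ≤ n) (α α' : ℕ)
    (hv1 : 1 ≤ α') (hv2 : α ≤ 2 * n + 1) (hle : α' ≤ α)
    (hcc : ¬(α = n + 1 ∧ α' = n + 1))
    (T T₁ T₂ : List BCol) (r₁ r₂ : List Bool)
    (hT : SemistdB n T)
    (h1 : RunB n α T T₁ r₁) (hfirst : T₁.length = T.length + 1)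
    (h2 : RunB n α' T₁ T₂ r₂) :
    T₂.length = T₁.length + 1 :=
  stmt_10_general n α α' hle hcc T T₁ T₂ r₁ r₂ h1 hfirst h2
end

section
/- Fix n ≥ 2 and the type D alphabet 1 < 2 < ⋯ < n−1 < {n, n̄} < n−1̄ < ⋯ < 1̄, in which n and n̄ are incomparable. During the type D column insertion of a single letter into a semistandard D tableau with at most two rows, the bumping route never moves down: if the inserted letter is set into the first row of some column, then in every column further right the bumped letter is also set into the first row. -/
/-- A column with at most two boxes: `one β`, or `two α β` with `α` above `β`.
A tableau with at most two rows is a list of such columns, read left to right. -/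
inductive DCol : Type
  | one (β : ℕ)
  | two (α β : ℕ)

/-- The type `D` alphabet `1 < ⋯ < n−1 < {n, n̄} < n−1̄ < ⋯ < 1̄` (with `n`, `n̄`
incomparable) is encoded as `{1, …, 2n}` with `x̄ = 2n+1−x` (so `n̄ = n+1`). -/
def barD (n x : ℕ) : ℕ := 2 * n + 1 - x

/-- The partial order on the type `D` alphabet: the natural order on the codes
except that `n` (code `n`) and `n̄` (code `n+1`) are incomparable. -/
def dle (n a b : ℕ) : Prop := a ≤ b ∧ ¬(a = n ∧ b = n + 1)

/-- The strict partial order on the type `D` alphabet. -/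
def dlt (n a b : ℕ) : Prop := a < b ∧ ¬(a = n ∧ b = n + 1)

/-- Validity of a single column of a semistandard `D` tableau: letters lie in
the alphabet, a two-box column `(α above β)` satisfies `α < β` or
`(α,β) ∈ {(n,n̄),(n̄,n)}`, and no column equals `(1 above 1̄)`. -/
def DColOK (n : ℕ) : DCol → Prop
  | .one β => 1 ≤ β ∧ β ≤ 2 * n
  | .two α β => 1 ≤ α ∧ β ≤ 2 * n ∧
      (dlt n α β ∨ (α = n ∧ β = n + 1) ∨ (α = n + 1 ∧ β = n)) ∧
      ¬(α = 1 ∧ β = 2 * n)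

/-- Conditions on two adjacent columns of a semistandard `D` tableau: two-box
columns lie to the left of one-box columns, both rows are weakly increasing in
the partial order, the `(x,x)`-configurations (`1 ≤ x < n`), the two forbidden
`2×2` configurations `((n−1 above n),(n above n−1̄))` and
`((n−1 above n̄),(n̄ above n−1̄))`, and the `(n,n)`-configurations (lower-left
and upper-right entries both in `{n,n̄}`) are all absent. -/
def DAdjOK (n : ℕ) : DCol → DCol → Prop
  | .one α, .one α' => dle n α α'
  | .one _, .two _ _ => False
  | .two α β, .one α' => dle n α α' ∧
      ¬((β = n ∨ β = n + 1) ∧ (α' = n ∨ α' = n + 1))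
  | .two α β, .two α' β' => dle n α α' ∧ dle n β β' ∧
      ¬((β = n ∨ β = n + 1) ∧ (α' = n ∨ α' = n + 1)) ∧
      ¬(∃ x, 1 ≤ x ∧ x < n ∧
        ((α = x ∧ α' = x ∧ β' = barD n x) ∨ (α = x ∧ β = barD n x ∧ β' = barD n x))) ∧
      ¬(α = n - 1 ∧ β = n ∧ α' = n ∧ β' = n + 2) ∧
      ¬(α = n - 1 ∧ β = n + 1 ∧ α' = n + 1 ∧ β' = n + 2)

/-- A semistandard `D` tableau with at most two rows, as a list of columns. -/
def SemistdD (n : ℕ) (cols : List DCol) : Prop :=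
  (∀ c ∈ cols, DColOK n c) ∧ List.Chain' (DAdjOK n) cols

/-- `RunD n a cols cols' route`: the type `D` column insertion of the letter `a`
into the tableau `cols` (elementary rules A0, A1, B0–B8) yields the tableau
`cols'`; `route` records, column by column along the bumping route, whether the
newly set letter lies in the first row (`true`) or in the second row (`false`). -/
inductive RunD (n : ℕ) : ℕ → List DCol → List DCol → List Bool → Prop
  | a0 (a : ℕ) :
      RunD n a [] [DCol.one a] [true]
  | a1 (a β : ℕ) (rest : List DCol)
      (h : dlt n β a ∨ (β = n ∧ a = n + 1) ∨ (β = n + 1 ∧ a = n)) :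
      RunD n a (DCol.one β :: rest) (DCol.two β a :: rest) [false]
  | b0 (a β : ℕ) (rest rest' : List DCol) (route : List Bool)
      (h : dle n a β)
      (hr : RunD n β rest rest' route) :
      RunD n a (DCol.one β :: rest) (DCol.one a :: rest') (true :: route)
  | b1 (a α γ : ℕ) (rest rest' : List DCol) (route : List Bool)
      (h1 : dlt n α a) (h2 : dle n a γ) (h3 : ¬(1 ≤ α ∧ α ≤ n ∧ γ = barD n α))
      (hr : RunD n γ rest rest' route) :
      RunD n a (DCol.two α γ :: rest) (DCol.two α a :: rest') (false :: route)
  | b2 (a β γ : ℕ) (rest rest' : List DCol) (route : List Bool)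
      (h1 : dle n a β) (h2 : dlt n β γ) (h3 : ¬(1 ≤ a ∧ a ≤ n ∧ γ = barD n a))
      (hr : RunD n β rest rest' route) :
      RunD n a (DCol.two β γ :: rest) (DCol.two a γ :: rest') (true :: route)
  | b3 (x β : ℕ) (rest rest' : List DCol) (route : List Bool)
      (hx1 : 2 ≤ x) (hx2 : x < n) (h1 : dle n x β) (h2 : dle n β (barD n x))
      (hr : RunD n (barD n (x - 1)) rest rest' route) :
      RunD n β (DCol.two x (barD n x) :: rest)
        (DCol.two (x - 1) β :: rest') (false :: route)
  | b4 (x β : ℕ) (rest rest' : List DCol) (route : List Bool)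
      (hx1 : 1 ≤ x) (hx2 : x + 1 < n) (h1 : dlt n x β) (h2 : dlt n β (barD n x))
      (hr : RunD n β rest rest' route) :
      RunD n x (DCol.two β (barD n x) :: rest)
        (DCol.two (x + 1) (barD n (x + 1)) :: rest') (true :: route)
  | b5 (x μ₁ μ₂ : ℕ) (rest rest' : List DCol) (route : List Bool)
      (hx1 : 1 ≤ x) (hx2 : x < n)
      (hμ : (μ₁ = n ∧ μ₂ = n + 1) ∨ (μ₁ = n + 1 ∧ μ₂ = n))
      (hr : RunD n μ₁ rest rest' route) :
      RunD n x (DCol.two μ₁ μ₂ :: rest) (DCol.two x μ₂ :: rest') (true :: route)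
  | b6 (x μ₁ μ₂ : ℕ) (rest rest' : List DCol) (route : List Bool)
      (hx1 : 1 ≤ x) (hx2 : x < n)
      (hμ : (μ₁ = n ∧ μ₂ = n + 1) ∨ (μ₁ = n + 1 ∧ μ₂ = n))
      (hr : RunD n (barD n x) rest rest' route) :
      RunD n μ₂ (DCol.two μ₁ (barD n x) :: rest)
        (DCol.two μ₁ μ₂ :: rest') (false :: route)
  | b7 (μ : ℕ) (rest rest' : List DCol) (route : List Bool)
      (hμ : μ = n ∨ μ = n + 1)
      (hr : RunD n μ rest rest' route) :
      RunD n (n - 1) (DCol.two μ (n + 2) :: rest)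
        (DCol.two μ (2 * n + 1 - μ) :: rest') (true :: route)
  | b8 (μ₁ μ₂ : ℕ) (rest rest' : List DCol) (route : List Bool)
      (hμ : (μ₁ = n ∧ μ₂ = n + 1) ∨ (μ₁ = n + 1 ∧ μ₂ = n))
      (hr : RunD n (n + 2) rest rest' route) :
      RunD n μ₂ (DCol.two μ₁ μ₂ :: rest)
        (DCol.two (n - 1) μ₂ :: rest') (false :: route)


lemma ssTailD {n : ℕ} {c : DCol} {l : List DCol} (h : SemistdD n (c :: l)) :
    SemistdD n l :=
  ⟨fun x hx => h.1 x (List.mem_cons_of_mem _ hx), h.2.tail⟩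

lemma ssAdjD {n : ℕ} {c c' : DCol} {l : List DCol} (h : SemistdD n (c :: c' :: l)) :
    DAdjOK n c c' := (List.isChain_cons_cons.mp h.2).1

set_option maxHeartbeats 2000000 in
lemma keyD (n : ℕ) : ∀ {a : ℕ} {cols cols' : List DCol} {route : List Bool},
    RunD n a cols cols' route → SemistdD n cols → List.Chain' (· ≤ ·) route := by
  intro a cols cols' route h
  induction h with
  | a0 a => intro _; exact List.isChain_singleton _
  | a1 a β rest h => intro _; exact List.isChain_singleton _
  | b0 a β rest rest' route h hr ih =>
    intro hT
    refine List.isChain_cons.mpr ⟨?_, ih (ssTailD hT)⟩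
    intro b hb
    simp only [List.head?] at hb
    cases hr with
    | a0 => simp_all
    | b0 => simp_all
    | b2 => simp_all
    | b4 => simp_all
    | b5 => simp_all
    | b7 => simp_all
    | a1 a2 β2 rest2 h2 =>
      exfalso
      have hadj := ssAdjD hT
      simp only [DAdjOK, dle, dlt] at hadj h2
      omega
    | b1 => exact (ssAdjD hT).elim
    | b3 => exact (ssAdjD hT).elim
    | b6 => exact (ssAdjD hT).elim
    | b8 => exact (ssAdjD hT).elim
  | b1 a α γ rest rest' route h1 h2 h3 hr ih =>
    intro hT
    exact List.isChain_cons.mpr ⟨fun b _ => Bool.false_le b, ih (ssTailD hT)⟩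
  | b2 a β γ rest rest' route h1 h2 h3 hr ih =>
    intro hT
    refine List.isChain_cons.mpr ⟨?_, ih (ssTailD hT)⟩
    intro b hb
    simp only [List.head?] at hb
    cases hr with
    | a0 => simp_all
    | b0 => simp_all
    | b2 => simp_all
    | b4 => simp_all
    | b5 => simp_all
    | b7 => simp_all
    | a1 a2 β2 rest2 h2' =>
      exfalso
      have hadj := ssAdjD hT
      simp only [DAdjOK, dle, dlt] at hadj h2'
      omega
    | b1 a2 α2 γ2 rest2 rest2' route2 h1' h2' h3' hr2 =>
      exfalso
      have hadj := ssAdjD hT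
      obtain ⟨hA, hB, hC, hD, h5, h6⟩ := hadj
      simp only [dle, dlt] at hA h1'
      omega
    | b3 x2 β2 rest2 rest2' route2 hx1 hx2 h1' h2' hr2 =>
      exfalso
      have hadj := ssAdjD hT
      obtain ⟨hA, hB, hC, hD, h5, h6⟩ := hadj
      exact hD ⟨x2, by omega, hx2, Or.inl ⟨le_antisymm hA.1 h1'.1, rfl, rfl⟩⟩
    | b6 x2 μ1 μ2 rest2 rest2' route2 hx1 hx2 hμ hr2 =>
      exfalso
      have hadj := ssAdjD hT
      obtain ⟨hA, hB, hC, hD, h5, h6⟩ := hadj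
      simp only [dle] at hA
      omega
    | b8 μ1 μ2 rest2 rest2' route2 hμ hr2 =>
      exfalso
      have hadj := ssAdjD hT
      obtain ⟨hA, hB, hC, hD, h5, h6⟩ := hadj
      simp only [dle] at hA
      omega
  | b3 x β rest rest' route hx1 hx2 h1 h2 hr ih =>
    intro hT
    exact List.isChain_cons.mpr ⟨fun b _ => Bool.false_le b, ih (ssTailD hT)⟩
  | b4 x β rest rest' route hx1 hx2 h1 h2 hr ih =>
    intro hT
    refine List.isChain_cons.mpr ⟨?_, ih (ssTailD hT)⟩
    intro b hb
    simp only [List.head?] at hb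
    cases hr with 
    | a0 => simp_all
    | b0 => simp_all
    | b2 => simp_all
    | b4 => simp_all
    | b5 => simp_all
    | b7 => simp_all
    | a1 a2 β2 rest2 h2' =>
      exfalso
      have hadj := ssAdjD hT
      simp only [DAdjOK, dle, dlt] at hadj h2'
      omega
    | b1 a2 α2 γ2 rest2 rest2' route2 h1' h2' h3' hr2 =>
      exfalso
      have hadj := ssAdjD hT
      obtain ⟨hA, hB, hC, hD, h5, h6⟩ := hadj
      simp only [dle, dlt] at hA h1'
      omega
    | b3 x2 β2 rest2 rest2' route2 hx1' hx2' h1' h2' hr2 =>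
      exfalso
      have hadj := ssAdjD hT
      obtain ⟨hA, hB, hC, hD, h5, h6⟩ := hadj
      exact hD ⟨x2, by omega, hx2', Or.inl ⟨le_antisymm hA.1 h1'.1, rfl, rfl⟩⟩
    | b6 x2 μ1 μ2 rest2 rest2' route2 hx1' hx2' hμ hr2 =>
      exfalso
      have hadj := ssAdjD hT
      obtain ⟨hA, hB, hC, hD, h5, h6⟩ := hadj
      simp only [dle] at hA
      omega
    | b8 μ1 μ2 rest2 rest2' route2 hμ hr2 =>
      exfalso
      have hadj := ssAdjD hT
      obtain ⟨hA, hB, hC, hD, h5, h6⟩ := hadj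
      simp only [dle] at hA
      omega
  | b5 x μ1 μ2 rest rest' route hx1 hx2 hμ hr ih =>
    intro hT
    refine List.isChain_cons.mpr ⟨?_, ih (ssTailD hT)⟩
    intro b hb
    simp only [List.head?] at hb
    cases hr with 
    | a0 => simp_all
    | b0 => simp_all
    | b2 => simp_all
    | b4 => simp_all
    | b5 => simp_all
    | b7 => simp_all
    | a1 a2 β2 rest2 h2' =>
      exfalso
      have hadj := ssAdjD hT
      simp only [DAdjOK, dle, dlt] at hadj h2'
      omega
    | b1 a2 α2 γ2 rest2 rest2' route2 h1' h2' h3' hr2 =>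
      exfalso
      have hadj := ssAdjD hT
      obtain ⟨hA, hB, hC, hD, h5, h6⟩ := hadj
      simp only [dle, dlt] at hA h1'
      omega
    | b3 x2 β2 rest2 rest2' route2 hx1' hx2' h1' h2' hr2 =>
      exfalso
      have hadj := ssAdjD hT
      obtain ⟨hA, hB, hC, hD, h5, h6⟩ := hadj
      simp only [dle] at hA
      omega
    | b6 x2 μ1' μ2' rest2 rest2' route2 hx1' hx2' hμ' hr2 =>
      exfalso
      have hadj := ssAdjD hT
      obtain ⟨hA, hB, hC, hD, h5, h6⟩ := hadj
      simp only [dle] at hA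
      omega
    | b8 μ1' μ2' rest2 rest2' route2 hμ' hr2 =>
      exfalso
      have hadj := ssAdjD hT
      obtain ⟨hA, hB, hC, hD, h5, h6⟩ := hadj
      simp only [dle] at hA
      omega
  | b6 x μ1 μ2 rest rest' route hx1 hx2 hμ hr ih =>
    intro hT
    exact List.isChain_cons.mpr ⟨fun b _ => Bool.false_le b, ih (ssTailD hT)⟩
  | b7 μ rest rest' route hμ hr ih =>
    intro hT
    refine List.isChain_cons.mpr ⟨?_, ih (ssTailD hT)⟩
    intro b hb
    simp only [List.head?] at hb
    cases hr with 
    | a0 => simp_all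
    | b0 => simp_all
    | b2 => simp_all
    | b4 => simp_all
    | b5 => simp_all
    | b7 => simp_all
    | a1 a2 β2 rest2 h2' =>
      exfalso
      have hadj := ssAdjD hT
      simp only [DAdjOK, dle, dlt] at hadj h2'
      omega
    | b1 a2 α2 γ2 rest2 rest2' route2 h1' h2' h3' hr2 =>
      exfalso
      have hadj := ssAdjD hT
      obtain ⟨hA, hB, hC, hD, h5, h6⟩ := hadj
      simp only [dle, dlt] at hA h1'
      omega
    | b3 x2 β2 rest2 rest2' route2 hx1' hx2' h1' h2' hr2 =>
      exfalso
      have hadj := ssAdjD hT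
      obtain ⟨hA, hB, hC, hD, h5, h6⟩ := hadj
      simp only [dle] at hA
      omega
    | b6 x2 μ1' μ2' rest2 rest2' route2 hx1' hx2' hμ' hr2 =>
      exfalso
      have hadj := ssAdjD hT
      obtain ⟨hA, hB, hC, hD, h5, h6⟩ := hadj
      simp only [dle] at hA
      omega
    | b8 μ1' μ2' rest2 rest2' route2 hμ' hr2 =>
      exfalso
      have hadj := ssAdjD hT
      obtain ⟨hA, hB, hC, hD, h5, h6⟩ := hadj
      simp only [dle] at hA
      omega
  | b8 μ1 μ2 rest rest' route hμ hr ih =>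
    intro hT
    exact List.isChain_cons.mpr ⟨fun b _ => Bool.false_le b, ih (ssTailD hT)⟩

/-- Column bumping lemma for type `D`: during the column insertion of a single
letter into a semistandard `D` tableau with at most two rows, the bumping route
never moves down — once the route is in the first row it stays there. -/
theorem stmt_11 (n : ℕ) (hn : 2 ≤ n) (a : ℕ) (ha1 : 1 ≤ a) (ha2 : a ≤ 2 * n)
    (cols cols' : List DCol) (route : List Bool)
    (hT : SemistdD n cols) (hrun : RunD n a cols cols' route) :
    List.Chain' (· ≤ ·) route := by
  exact keyD n hrun hT
end

section
/- With the type D alphabet and two-row insertion rules as above, suppose α' ≤ α (in particular (α, α') ∉ {(n, n̄), (n̄, n)}). If inserting α into a two-row semistandard D tableau T adds a new box at the end of the first row, then inserting α' into (α → T) also adds a new box at the end of the first row. -/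
/-! Both insertions end in a new column exactly when their bumping routes run through every
column and finish with rule A0. Follow the two routes together: in each column, the letter that
`α'` bumps out of the column left by `α` is at most the letter `α` bumped (a finite check over
rules B0–B8), and rule A1 never stops the second route, since a one-box column left by the first
route holds the letter just inserted, and A1 would need a strictly larger letter. -/

/-- The condition of rule A1 for placing `a` under `β`. -/
def DAbove (n β a : ℕ) : Prop := dlt n β a ∨ (β = n ∧ a = n + 1) ∨ (β = n + 1 ∧ a = n)

/-- Rules B0–B8 on a single column: inserting `a` into `c` leaves `c'` and passes `a₁` on to
the next column. -/
inductive BumpD (n : ℕ) : ℕ → DCol → DCol → ℕ → Prop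
  | b0 (a β : ℕ) (h : dle n a β) : BumpD n a (.one β) (.one a) β
  | b1 (a α γ : ℕ) (h1 : dlt n α a) (h2 : dle n a γ)
      (h3 : ¬(1 ≤ α ∧ α ≤ n ∧ γ = barD n α)) :
      BumpD n a (.two α γ) (.two α a) γ
  | b2 (a β γ : ℕ) (h1 : dle n a β) (h2 : dlt n β γ) (h3 : ¬(1 ≤ a ∧ a ≤ n ∧ γ = barD n a)) :
      BumpD n a (.two β γ) (.two a γ) β
  | b3 (x β : ℕ) (hx1 : 2 ≤ x) (hx2 : x < n) (h1 : dle n x β) (h2 : dle n β (barD n x)) :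
      BumpD n β (.two x (barD n x)) (.two (x - 1) β) (barD n (x - 1))
  | b4 (x β : ℕ) (hx1 : 1 ≤ x) (hx2 : x + 1 < n) (h1 : dlt n x β) (h2 : dlt n β (barD n x)) :
      BumpD n x (.two β (barD n x)) (.two (x + 1) (barD n (x + 1))) β
  | b5 (x μ₁ μ₂ : ℕ) (hx1 : 1 ≤ x) (hx2 : x < n)
      (hμ : (μ₁ = n ∧ μ₂ = n + 1) ∨ (μ₁ = n + 1 ∧ μ₂ = n)) :
      BumpD n x (.two μ₁ μ₂) (.two x μ₂) μ₁
  | b6 (x μ₁ μ₂ : ℕ) (hx1 : 1 ≤ x) (hx2 : x < n)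
      (hμ : (μ₁ = n ∧ μ₂ = n + 1) ∨ (μ₁ = n + 1 ∧ μ₂ = n)) :
      BumpD n μ₂ (.two μ₁ (barD n x)) (.two μ₁ μ₂) (barD n x)
  | b7 (μ : ℕ) (hμ : μ = n ∨ μ = n + 1) :
      BumpD n (n - 1) (.two μ (n + 2)) (.two μ (2 * n + 1 - μ)) μ
  | b8 (μ₁ μ₂ : ℕ) (hμ : (μ₁ = n ∧ μ₂ = n + 1) ∨ (μ₁ = n + 1 ∧ μ₂ = n)) :
      BumpD n μ₂ (.two μ₁ μ₂) (.two (n - 1) μ₂) (n + 2)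

theorem BumpD.dle_bumped {n a b a₁ b₁ : ℕ} {c c' c'' : DCol} (hn : 2 ≤ n)
    (h₁ : BumpD n a c c' a₁) (h₂ : BumpD n b c' c'' b₁) (hba : dle n b a) :
    dle n b₁ a₁ := by
  generalize hd : c' = d at h₂
  cases h₁ <;> cases h₂ <;> simp only [DCol.one.injEq, DCol.two.injEq, reduceCtorEq] at hd <;>
    simp only [dle, dlt, barD] at * <;> omega

theorem not_dAbove_of_dle {n a b : ℕ} (hba : dle n b a) : ¬DAbove n a b := by
  simp only [DAbove, dle, dlt] at *
  omega

theorem BumpD.not_dAbove {n a b a₁ β : ℕ} {c : DCol} (h : BumpD n a c (.one β) a₁)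
    (hba : dle n b a) : ¬DAbove n β b := by
  cases h
  exact not_dAbove_of_dle hba

theorem RunD.eq_of_nil {n a : ℕ} {cols : List DCol} {r : List Bool} (h : RunD n a [] cols r) :
    cols = [.one a] := by
  cases h
  rfl

theorem RunD.cons_cases {n a : ℕ} {c : DCol} {rest cols : List DCol} {r : List Bool}
    (h : RunD n a (c :: rest) cols r) :
    (∃ β, c = .one β ∧ DAbove n β a ∧ cols = .two β a :: rest) ∨
      ∃ c' a₁ rest' r', BumpD n a c c' a₁ ∧ RunD n a₁ rest rest' r' ∧ cols = c' :: rest' := by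
  cases h with
  | a1 _ _ _ h => exact .inl ⟨_, rfl, h, rfl⟩
  | b0 _ _ _ _ _ h hr => exact .inr ⟨_, _, _, _, .b0 _ _ h, hr, rfl⟩
  | b1 _ _ _ _ _ _ h1 h2 h3 hr => exact .inr ⟨_, _, _, _, .b1 _ _ _ h1 h2 h3, hr, rfl⟩
  | b2 _ _ _ _ _ _ h1 h2 h3 hr => exact .inr ⟨_, _, _, _, .b2 _ _ _ h1 h2 h3, hr, rfl⟩
  | b3 _ _ _ _ _ hx1 hx2 h1 h2 hr => exact .inr ⟨_, _, _, _, .b3 _ _ hx1 hx2 h1 h2, hr, rfl⟩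
  | b4 _ _ _ _ _ hx1 hx2 h1 h2 hr => exact .inr ⟨_, _, _, _, .b4 _ _ hx1 hx2 h1 h2, hr, rfl⟩
  | b5 _ _ _ _ _ _ hx1 hx2 hμ hr => exact .inr ⟨_, _, _, _, .b5 _ _ _ hx1 hx2 hμ, hr, rfl⟩
  | b6 _ _ _ _ _ _ hx1 hx2 hμ hr => exact .inr ⟨_, _, _, _, .b6 _ _ _ hx1 hx2 hμ, hr, rfl⟩
  | b7 _ _ _ _ hμ hr => exact .inr ⟨_, _, _, _, .b7 _ hμ, hr, rfl⟩
  | b8 _ _ _ _ _ hμ hr => exact .inr ⟨_, _, _, _, .b8 _ _ hμ, hr, rfl⟩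

theorem RunD.length_succ_of_dle {n a b : ℕ} (hn : 2 ≤ n) {cols cols₁ cols₂ : List DCol}
    {r₁ r₂ : List Bool} (h₁ : RunD n a cols cols₁ r₁) (hgrow : cols₁.length = cols.length + 1)
    (hba : dle n b a) (h₂ : RunD n b cols₁ cols₂ r₂) : cols₂.length = cols₁.length + 1 := by
  induction cols generalizing a b cols₁ cols₂ r₁ r₂ with
  | nil =>
    obtain rfl := h₁.eq_of_nil
    rcases h₂.cons_cases with ⟨β, hβ, hstack, -⟩ | ⟨c', a₁, rest', r', hbump, hrest, rfl⟩
    · cases hβ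
      exact absurd hstack (not_dAbove_of_dle hba)
    · cases hbump
      simp [hrest.eq_of_nil]
  | cons c rest ih =>
    rcases h₁.cons_cases with ⟨β, -, -, rfl⟩ | ⟨c', a₁, rest₁, r', hbump₁, hrest₁, rfl⟩
    · simp at hgrow
    rcases h₂.cons_cases with ⟨β, rfl, hstack, -⟩ | ⟨c'', b₁, rest₂, r'', hbump₂, hrest₂, rfl⟩
    · exact absurd hstack (hbump₁.not_dAbove hba)
    simp only [List.length_cons, add_left_inj] at hgrow ⊢
    exact ih hrest₁ hgrow (hbump₁.dle_bumped hn hbump₂ hba) hrest₂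

theorem stmt_12_general (n : ℕ) (hn : 2 ≤ n) (α α' : ℕ)
    (hle : dle n α' α)
    (T T₁ T₂ : List DCol) (r₁ r₂ : List Bool)
    (h1 : RunD n α T T₁ r₁) (hfirst : T₁.length = T.length + 1)
    (h2 : RunD n α' T₁ T₂ r₂) :
    T₂.length = T₁.length + 1 :=
  RunD.length_succ_of_dle hn h1 hfirst hle h2

/-- Corollary of the type `D` column bumping lemma: if `α' ≤ α` in the type `D`
partial order (in particular `(α,α') ∉ {(n,n̄),(n̄,n)}`), and inserting `α` into
a two-row semistandard `D` tableau `T` adds a new box at the end of the first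
row (i.e. creates a new column), then inserting `α'` into `(α → T)` also adds a
new box at the end of the first row. -/
theorem stmt_12 (n : ℕ) (hn : 2 ≤ n) (α α' : ℕ)
    (hv1 : 1 ≤ α') (hv2 : α ≤ 2 * n) (hle : dle n α' α)
    (T T₁ T₂ : List DCol) (r₁ r₂ : List Bool)
    (hT : SemistdD n T)
    (h1 : RunD n α T T₁ r₁) (hfirst : T₁.length = T.length + 1)
    (h2 : RunD n α' T₁ T₂ r₂) :
    T₂.length = T₁.length + 1 :=
  stmt_12_general n hn α α' hle T T₁ T₂ r₁ r₂ h1 hfirst h2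
end

section
/- Let b₁ be the element (l, 0, …, 0) of the U_q'(B^{(1)}_n) (or D^{(1)}_n) crystal B_l and b₂ = (x₁, x₂, 0, …, 0, x̄₁) ∈ B_k with k = x₁ + x₂ + x̄₁ and l ≥ k. With the normalization H((l,0,…,0) ⊗ (k,0,…,0)) = 2k, the quantities produced by the insertion rule satisfy: z = x̄₁, l' = l − x̄₁, k' = k − x̄₁, the second row of the product tableau has length m = x₂, and hence 2·min(l', k') − m = 2(k − x̄₁) − x₂. -/
/-- `InsertsB n w T T'`: successively column-inserting the letters of the list
`w` (in order) into the tableau `T` yields the tableau `T'`. -/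
inductive InsertsB (n : ℕ) : List ℕ → List BCol → List BCol → Prop
  | nil (T : List BCol) : InsertsB n [] T T
  | cons (a : ℕ) (ws : List ℕ) (T T' T'' : List BCol) (route : List Bool)
      (h : RunB n a T T' route) (hs : InsertsB n ws T' T'') :
      InsertsB n (a :: ws) T T''

/-- The number of two-box columns, i.e. the length of the second row. -/
def countTwo (cols : List BCol) : ℕ :=
  cols.countP fun c => match c with | BCol.two _ _ => true | BCol.one _ => false


/-! Column-inserting the letter 2 into the tableau whose columns are `j` copies of `(1 above 2)`
followed by `m + 1` single boxes `1` bumps the 1 under the `(1 above 2)` columns until it reaches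
the first single box, which becomes a new column `(1 above 2)`; inserting the letter 1 just adds
one box `1` at the end of the first row. So `2^{x₂}` then `1^{x₁}` inserted into `1^{l - x̄₁}`
gives `x₂` two-box columns, and the rest is arithmetic with `x̄₁ ≤ k ≤ l`. -/

def oneTwoTableau (j m : ℕ) : List BCol :=
  List.replicate j (BCol.two 1 2) ++ List.replicate m (BCol.one 1)

theorem countTwo_oneTwoTableau (j m : ℕ) : countTwo (oneTwoTableau j m) = j := by
  simp [countTwo, oneTwoTableau, List.countP_append, List.countP_replicate]

theorem InsertsB.append {n : ℕ} {w₁ w₂ : List ℕ} {T T' T'' : List BCol}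
    (h₁ : InsertsB n w₁ T T') (h₂ : InsertsB n w₂ T' T'') :
    InsertsB n (w₁ ++ w₂) T T'' := by
  induction h₁ with
  | nil => exact h₂
  | cons _ _ _ _ _ route h _ ih => exact .cons _ _ _ _ _ route h (ih h₂)

theorem InsertsB.replicate {n a : ℕ} (x : ℕ) {f : ℕ → List BCol}
    (step : ∀ i < x, ∃ route, RunB n a (f i) (f (i + 1)) route) :
    InsertsB n (List.replicate x a) (f 0) (f x) := by
  induction x generalizing f with
  | zero => exact .nil _
  | succ x ih =>
    obtain ⟨route, h⟩ := step 0 (Nat.succ_pos x)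
    exact .cons _ _ _ _ _ route h
      (ih (f := fun i => f (i + 1)) fun i hi => step (i + 1) (by omega))

theorem exists_runB_two_oneTwoTableau {n : ℕ} (hn : 2 ≤ n) (j m : ℕ) :
    ∃ route, RunB n 2 (oneTwoTableau j (m + 1)) (oneTwoTableau (j + 1) m) route := by
  induction j with
  | zero => exact ⟨[false], .a1 2 1 _ (Or.inl one_lt_two)⟩
  | succ j ih =>
    obtain ⟨route, h⟩ := ih
    exact ⟨false :: route,
      .b1 2 1 2 _ _ route one_lt_two le_rfl (by simp only [barB]; omega) (by omega) h⟩

theorem exists_runB_one_oneTwoTableau {n : ℕ} (hn : 0 < n) (j m : ℕ) :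
    ∃ route, RunB n 1 (oneTwoTableau j m) (oneTwoTableau j (m + 1)) route := by
  induction j with
  | zero =>
    induction m with
    | zero => exact ⟨[true], .a0 1⟩
    | succ m ih =>
      obtain ⟨route, h⟩ := ih
      exact ⟨true :: route, .b0 1 1 _ _ route le_rfl (by omega) h⟩
  | succ j ih =>
    obtain ⟨route, h⟩ := ih
    exact ⟨true :: route,
      .b2 1 1 2 _ _ route le_rfl one_lt_two (by simp only [barB]; omega) (by omega) h⟩

theorem insertsB_replicate_two {n : ℕ} (hn : 2 ≤ n) (x m : ℕ) :
    InsertsB n (List.replicate x 2) (oneTwoTableau 0 (x + m)) (oneTwoTableau x m) := by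
  have h := InsertsB.replicate (n := n) (a := 2) x (f := fun i => oneTwoTableau i (x - i + m))
    fun i hi => by
      rw [show x - i + m = x - (i + 1) + m + 1 by omega]
      exact exists_runB_two_oneTwoTableau hn i _
  simpa using h

theorem insertsB_replicate_one {n : ℕ} (hn : 0 < n) (x j m : ℕ) :
    InsertsB n (List.replicate x 1) (oneTwoTableau j m) (oneTwoTableau j (m + x)) :=
  InsertsB.replicate (f := fun i => oneTwoTableau j (m + i)) x
    fun i _ => exists_runB_one_oneTwoTableau hn j (m + i)

/-- For the highest weight elements `b₁ = (l,0,…,0) ∈ B_l` and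
`b₂ = (x₁,x₂,0,…,0,x̄₁) ∈ B_k` with `k = x₁+x₂+x̄₁ ≤ l`, the quantities of the
insertion rule satisfy: `z = min(#1's in T(b₁), #1̄'s in T(b₂)) = x̄₁`,
inserting `2^{x₂}` then `1^{x₁}` into `T_* = 1^{l−x̄₁}` produces a tableau whose
second row has length `m = x₂`, and `2·min(l',k') − m = 2(k−x̄₁) − x₂`
where `l' = l−x̄₁`, `k' = k−x̄₁`. -/
theorem stmt_14 (n l k x₁ x₂ xb₁ : ℕ) (hn : 2 ≤ n)
    (hk : k = x₁ + x₂ + xb₁) (hlk : k ≤ l) :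
    min l xb₁ = xb₁ ∧
    (∃ T' : List BCol,
      InsertsB n (List.replicate x₂ 2 ++ List.replicate x₁ 1)
        (List.replicate (l - xb₁) (BCol.one 1)) T' ∧
      countTwo T' = x₂) ∧
    2 * min (l - xb₁) (k - xb₁) - x₂ = 2 * (k - xb₁) - x₂ := by
  refine ⟨by omega, ⟨oneTwoTableau x₂ (l - xb₁ - x₂ + x₁), ?_, countTwo_oneTwoTableau _ _⟩,
    by rw [min_eq_right (by omega)]⟩
  have twos := insertsB_replicate_two hn x₂ (l - xb₁ - x₂)
  rw [show x₂ + (l - xb₁ - x₂) = l - xb₁ by omega] at twos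
  exact twos.append (insertsB_replicate_one (by omega) x₁ x₂ (l - xb₁ - x₂))
end
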